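/- (Metaplectic covariance of the phase-space width matrix G_B.) Let S ∈ Sp(d,ℝ) be written in d×d blocks S = [[S₁₁, S₁₂],[S₂₁, S₂₂]] and let B ∈ Σ_d. Then S₁₁ + S₁₂B is invertible, the matrix B′ := (S₂₁ + S₂₂B)(S₁₁ + S₁₂B)^{-1} belongs to Σ_d, and the associated width matrices satisfy G_{B′} = (S^{-1})ᵀ G_B S^{-1}. -/

import Mathlib

/-!
Complexify `S` and let `U = [1; B]` be the frame of the graph of `B`. We use Mathlib's
`J = [[0, -1], [1, 0]] = -Jmat d`. For real symplectic `S` both `W ↦ Wᵀ J W` and `W ↦ Wᴴ J W` are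
invariant under `W ↦ S W`, and on `U` they equal `Bᵀ - B = 0` and `Bᴴ - B = -2i Im B`. Writing
`S U = [M; N]`, this gives `Nᴴ M - Mᴴ N = -2i Im B`, which makes `M` injective because `Im B > 0`.
Then `S U M⁻¹ = [1; B']`, so `B'ᵀ = B'` and `Im B' = M⁻ᴴ (Im B) M⁻¹ > 0`. Finally
`G_B = Jᵀ (U (Im B)⁻¹ Uᴴ) J - iJ` and `U' (Im B')⁻¹ U'ᴴ = S (U (Im B)⁻¹ Uᴴ) Sᵀ`, so the covariance
of `G` follows from `Jᵀ S = S⁻ᵀ Jᵀ` and `S⁻ᵀ J S⁻¹ = J`.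
-/

noncomputable section

open Matrix

/-- The standard symplectic matrix `J = [[0, I_d],[−I_d, 0]]`. -/
def Jmat (d : ℕ) : Matrix (Fin d ⊕ Fin d) (Fin d ⊕ Fin d) ℝ :=
  Matrix.fromBlocks 0 1 (-1) 0

/-- Entrywise complexification of a real matrix. -/
def cmplx {m n : Type*} (M : Matrix m n ℝ) : Matrix m n ℂ := M.map Complex.ofReal

/-- Entrywise imaginary part of a complex matrix. -/
def imM {d : ℕ} (M : Matrix (Fin d) (Fin d) ℂ) : Matrix (Fin d) (Fin d) ℝ :=
  Matrix.of fun i j => (M i j).im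

/-- Entrywise real part of a complex matrix. -/
def reM {d : ℕ} (M : Matrix (Fin d) (Fin d) ℂ) : Matrix (Fin d) (Fin d) ℝ :=
  Matrix.of fun i j => (M i j).re

/-- The width matrix `G_B`. -/
def GB {d : ℕ} (B : Matrix (Fin d) (Fin d) ℂ) :
    Matrix (Fin d ⊕ Fin d) (Fin d ⊕ Fin d) ℝ :=
  Matrix.fromBlocks (imM B + reM B * (imM B)⁻¹ * reM B) (-(reM B * (imM B)⁻¹))
    (-((imM B)⁻¹ * reM B)) (imM B)⁻¹

open Complex
open scoped ComplexOrder

section Complexification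

variable {m n p : Type*}

lemma cmplx_mul [Fintype n] (A : Matrix m n ℝ) (B : Matrix n p ℝ) :
    cmplx (A * B) = cmplx A * cmplx B :=
  Matrix.map_mul (f := ofRealHom)

lemma cmplx_add (A B : Matrix m n ℝ) : cmplx (A + B) = cmplx A + cmplx B :=
  Matrix.map_add _ ofReal_add A B

lemma cmplx_neg (A : Matrix m n ℝ) : cmplx (-A) = -cmplx A :=
  Matrix.map_neg _ ofReal_neg A

lemma cmplx_one [DecidableEq n] : cmplx (1 : Matrix n n ℝ) = 1 :=
  Matrix.map_one _ ofReal_zero ofReal_one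

lemma cmplx_transpose (A : Matrix m n ℝ) : cmplx Aᵀ = (cmplx A)ᵀ := rfl

lemma conjTranspose_cmplx (A : Matrix m n ℝ) : (cmplx A)ᴴ = (cmplx A)ᵀ := by
  ext i j; simp [cmplx]

lemma cmplx_fromBlocks {m' n' : Type*} (A : Matrix m n ℝ) (B : Matrix m n' ℝ)
    (C : Matrix m' n ℝ) (D : Matrix m' n' ℝ) :
    cmplx (fromBlocks A B C D) = fromBlocks (cmplx A) (cmplx B) (cmplx C) (cmplx D) :=
  fromBlocks_map A B C D _

lemma cmplx_injective : Function.Injective (cmplx : Matrix m n ℝ → Matrix m n ℂ) :=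
  map_injective ofReal_injective

lemma cmplx_inv [Fintype n] [DecidableEq n] (A : Matrix n n ℝ) (hA : IsUnit A.det) :
    cmplx A⁻¹ = (cmplx A)⁻¹ :=
  (inv_eq_right_inv (by rw [← cmplx_mul, mul_nonsing_inv _ hA, cmplx_one])).symm

variable [Fintype n]

lemma re_star_dotProduct_cmplx_mulVec (Y : Matrix n n ℝ) (v : n → ℂ) :
    (star v ⬝ᵥ cmplx Y *ᵥ v).re =
      (fun i => (v i).re) ⬝ᵥ Y *ᵥ (fun i => (v i).re) +
      (fun i => (v i).im) ⬝ᵥ Y *ᵥ (fun i => (v i).im) := by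
  simp only [dotProduct, mulVec, re_sum, Pi.star_apply, Finset.mul_sum,
    ← Finset.sum_add_distrib]
  refine Finset.sum_congr rfl fun i _ => Finset.sum_congr rfl fun j _ => ?_
  simp [cmplx, mul_re, mul_im]

lemma posDef_cmplx_iff {Y : Matrix n n ℝ} : (cmplx Y).PosDef ↔ Y.PosDef := by
  have hherm : (cmplx Y).IsHermitian ↔ Y.IsHermitian := by
    rw [IsHermitian, IsHermitian, conjTranspose_cmplx, ← cmplx_transpose,
      cmplx_injective.eq_iff, conjTranspose_eq_transpose_of_trivial]
  rw [posDef_iff_dotProduct_mulVec, posDef_iff_dotProduct_mulVec, hherm]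
  refine and_congr_right fun hY => ⟨fun h x hx => ?_, fun h v hv => ?_⟩
  · have := (pos_iff.mp (h (x := fun i => (x i : ℂ)) fun h0 => hx ?_)).1
    · simpa [re_star_dotProduct_cmplx_mulVec] using this
    · funext i; simpa using congrFun h0 i
  · refine pos_iff.mpr ⟨?_, ((hherm.mpr hY).im_star_dotProduct_mulVec_self v).symm⟩
    have hY' : Y.PosDef := posDef_iff_dotProduct_mulVec.mpr ⟨hY, h⟩
    have hre := hY'.posSemidef.dotProduct_mulVec_nonneg (fun i => (v i).re)
    have him := hY'.posSemidef.dotProduct_mulVec_nonneg (fun i => (v i).im)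
    simp only [star_trivial] at hre him
    rw [re_star_dotProduct_cmplx_mulVec]
    by_cases hv0 : (fun i => (v i).re) = 0
    · have : (fun i => (v i).im) ≠ 0 := fun h0 =>
        hv (funext fun i => Complex.ext (congrFun hv0 i) (congrFun h0 i))
      simpa using add_pos_of_nonneg_of_pos hre (h this)
    · simpa using add_pos_of_pos_of_nonneg (h hv0) him

end Complexification

section SymplecticForm

variable {l k R : Type*} [Fintype l] [DecidableEq l] [CommRing R]

lemma transpose_fromRows_mul_J_mul_fromRows (X Y : Matrix l k R) :
    (fromRows X Y)ᵀ * J l R * fromRows X Y = Yᵀ * X - Xᵀ * Y := by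
  rw [transpose_fromRows, J, fromCols_mul_fromBlocks, fromCols_mul_fromRows]
  simp [sub_eq_add_neg]

lemma conjTranspose_fromRows_mul_J_mul_fromRows [StarRing R] (X Y : Matrix l k R) :
    (fromRows X Y)ᴴ * J l R * fromRows X Y = Yᴴ * X - Xᴴ * Y := by
  rw [conjTranspose_fromRows_eq_fromCols_conjTranspose, J, fromCols_mul_fromBlocks,
    fromCols_mul_fromRows]
  simp [sub_eq_add_neg]

abbrev graphFrame (B : Matrix l l R) : Matrix (l ⊕ l) l R := fromRows 1 B

lemma mul_graphFrame (A : Matrix (l ⊕ l) (l ⊕ l) R) (B : Matrix l l R) :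
    A * graphFrame B =
      fromRows (A.toBlocks₁₁ + A.toBlocks₁₂ * B) (A.toBlocks₂₁ + A.toBlocks₂₂ * B) := by
  conv_lhs => rw [← fromBlocks_toBlocks A]
  rw [fromBlocks_mul_fromRows, Matrix.mul_one, Matrix.mul_one]

variable {A : Matrix (l ⊕ l) (l ⊕ l) R}

lemma SymplecticGroup.transpose_mul_J_mul_of_mem {m : Type*} [Fintype k]
    (hA : A ∈ symplecticGroup l R) (W : Matrix (l ⊕ l) k R) (X : Matrix k m R) :
    (A * W * X)ᵀ * J l R * (A * W * X) = Xᵀ * (Wᵀ * J l R * W) * X :=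
  calc (A * W * X)ᵀ * J l R * (A * W * X) = Xᵀ * Wᵀ * (Aᵀ * J l R * A) * W * X := by
        simp only [transpose_mul, Matrix.mul_assoc]
    _ = Xᵀ * (Wᵀ * J l R * W) * X := by
        rw [SymplecticGroup.mem_iff'.mp hA]; simp only [Matrix.mul_assoc]

lemma SymplecticGroup.conjTranspose_mul_J_mul_of_mem {m : Type*} [Fintype k] [StarRing R]
    (hA : A ∈ symplecticGroup l R) (hAreal : Aᴴ = Aᵀ) (W : Matrix (l ⊕ l) k R)
    (X : Matrix k m R) :
    (A * W * X)ᴴ * J l R * (A * W * X) = Xᴴ * (Wᴴ * J l R * W) * X :=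
  calc (A * W * X)ᴴ * J l R * (A * W * X) = Xᴴ * Wᴴ * (Aᵀ * J l R * A) * W * X := by
        simp only [conjTranspose_mul, hAreal, Matrix.mul_assoc]
    _ = Xᴴ * (Wᴴ * J l R * W) * X := by
        rw [SymplecticGroup.mem_iff'.mp hA]; simp only [Matrix.mul_assoc]

lemma SymplecticGroup.J_congr_add_smul_J (hA : A ∈ symplecticGroup l R)
    (H : Matrix (l ⊕ l) (l ⊕ l) R) (c : R) :
    (J l R)ᵀ * (A * H * Aᵀ) * J l R + c • J l R =
      (A⁻¹)ᵀ * ((J l R)ᵀ * H * J l R + c • J l R) * A⁻¹ := by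
  have hJinv : (A⁻¹)ᵀ * J l R * A⁻¹ = J l R := by
    simpa [SymplecticGroup.coe_inv', SymplecticGroup.mem_iff'] using
      (⟨A, hA⟩⁻¹ : symplecticGroup l R).2
  have hJA : Aᵀ * J l R = J l R * A⁻¹ :=
    calc Aᵀ * J l R = Aᵀ * J l R * A * A⁻¹ :=
          (mul_nonsing_inv_cancel_right _ _ (SymplecticGroup.symplectic_det hA)).symm
      _ = J l R * A⁻¹ := by rw [SymplecticGroup.mem_iff'.mp hA]
  have hJAt : (J l R)ᵀ * A = (A⁻¹)ᵀ * (J l R)ᵀ := by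
    rw [← transpose_transpose A, ← transpose_mul, hJA, transpose_mul, transpose_transpose,
      transpose_nonsing_inv]
  calc (J l R)ᵀ * (A * H * Aᵀ) * J l R + c • J l R
      = ((J l R)ᵀ * A) * H * (Aᵀ * J l R) + c • ((A⁻¹)ᵀ * J l R * A⁻¹) := by
        rw [hJinv]; simp only [Matrix.mul_assoc]
    _ = (A⁻¹)ᵀ * ((J l R)ᵀ * H * J l R + c • J l R) * A⁻¹ := by
        rw [hJA, hJAt, Matrix.mul_add, Matrix.add_mul, Matrix.mul_smul, Matrix.smul_mul]
        simp only [Matrix.mul_assoc]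

end SymplecticForm

lemma isUnit_of_conjTranspose_mul_sub_eq_smul_posDef {n K : Type*} [Fintype n] [DecidableEq n]
    [Field K] [PartialOrder K] [StarRing K] {M N H : Matrix n n K} {c : K} (hc : c ≠ 0)
    (hH : H.PosDef) (h : Nᴴ * M - Mᴴ * N = c • H) : IsUnit M := by
  by_contra hM
  obtain ⟨v, hv, hMv⟩ : ∃ v ≠ 0, M *ᵥ v = 0 := by
    obtain ⟨a, b, hab⟩ :=
      Function.not_injective_iff.mp <| mulVec_injective_iff_isUnit.not.mpr hM
    exact ⟨a - b, by simp [sub_eq_zero, hab, mulVec_sub]⟩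
  have hzero : star v ⬝ᵥ (Nᴴ * M - Mᴴ * N) *ᵥ v = 0 := by
    rw [sub_mulVec, ← mulVec_mulVec, ← mulVec_mulVec, hMv, mulVec_zero, zero_sub,
      dotProduct_neg, dotProduct_mulVec, ← star_mulVec, hMv]
    simp
  rw [h, smul_mulVec, dotProduct_smul, smul_eq_mul] at hzero
  exact (hH.dotProduct_mulVec_pos hv).ne' ((mul_eq_zero.mp hzero).resolve_left hc)

section SiegelAction

variable {d : ℕ}

lemma eq_cmplx_reM_add_I_smul_cmplx_imM (B : Matrix (Fin d) (Fin d) ℂ) :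
    B = cmplx (reM B) + I • cmplx (imM B) := by
  ext i j; simp [cmplx, reM, imM, Complex.ext_iff]

lemma Matrix.IsSymm.conjTranspose_eq {B : Matrix (Fin d) (Fin d) ℂ} (hB : B.IsSymm) :
    Bᴴ = cmplx (reM B) - I • cmplx (imM B) := by
  ext i j
  simp [cmplx, reM, imM, conjTranspose_apply, hB.apply i j, Complex.ext_iff]

lemma conjTranspose_graphFrame_mul_J_mul {B : Matrix (Fin d) (Fin d) ℂ} (hB : B.IsSymm) :
    (graphFrame B)ᴴ * J (Fin d) ℂ * graphFrame B = (-(2 * I)) • cmplx (imM B) := by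
  rw [conjTranspose_fromRows_mul_J_mul_fromRows, conjTranspose_one, Matrix.mul_one,
    Matrix.one_mul, hB.conjTranspose_eq]
  linear_combination (norm := module) -eq_cmplx_reM_add_I_smul_cmplx_imM B

lemma fromBlocks_eq_J_congr_graphFrame {n : Type*} [Fintype n] [DecidableEq n]
    {B X Y Z : Matrix n n ℂ} (hB : B = X + I • Y) (hBH : Bᴴ = X - I • Y) (hYZ : Y * Z = 1)
    (hZY : Z * Y = 1) :
    fromBlocks (Y + X * Z * X) (-(X * Z)) (-(Z * X)) Z =
      (J n ℂ)ᵀ * (graphFrame B * Z * (graphFrame B)ᴴ) * J n ℂ + (-I) • J n ℂ := by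
  have hBZ : B * Z = X * Z + I • 1 := by rw [hB, add_mul, smul_mul_assoc, hYZ]
  have hZBH : Z * Bᴴ = Z * X - I • 1 := by rw [hBH, mul_sub, mul_smul_comm, hZY]
  have hBZBH : B * Z * Bᴴ = Y + X * Z * X := by
    rw [hBZ, hBH]
    simp only [add_mul, mul_sub, smul_mul_assoc, mul_smul_comm, Matrix.mul_assoc, hZY, one_mul,
      mul_one]
    match_scalars <;> simp
  rw [graphFrame, conjTranspose_fromRows_eq_fromCols_conjTranspose, conjTranspose_one,
    fromRows_mul, fromRows_mul_fromCols, J, fromBlocks_transpose, fromBlocks_multiply,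
    fromBlocks_multiply, fromBlocks_smul, fromBlocks_add]
  simp only [zero_mul, mul_zero, neg_mul, one_mul, mul_one, mul_neg, neg_neg, add_zero, zero_add,
    transpose_zero, transpose_one, transpose_neg, smul_zero, smul_neg]
  rw [hBZBH, hBZ, hZBH]
  congr 1 <;> module

lemma cmplx_GB {B : Matrix (Fin d) (Fin d) ℂ} (hB : B.IsSymm) (hY : IsUnit (imM B).det) :
    cmplx (GB B) = (J (Fin d) ℂ)ᵀ * (graphFrame B * (cmplx (imM B))⁻¹ * (graphFrame B)ᴴ) *
      J (Fin d) ℂ + (-I) • J (Fin d) ℂ := by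
  have hYZ : cmplx (imM B) * cmplx (imM B)⁻¹ = 1 := by
    rw [← cmplx_mul, mul_nonsing_inv _ hY, cmplx_one]
  have hZY : cmplx (imM B)⁻¹ * cmplx (imM B) = 1 := by
    rw [← cmplx_mul, nonsing_inv_mul _ hY, cmplx_one]
  rw [← cmplx_inv _ hY, ← fromBlocks_eq_J_congr_graphFrame (eq_cmplx_reM_add_I_smul_cmplx_imM B)
    hB.conjTranspose_eq hYZ hZY, GB, cmplx_fromBlocks]
  simp only [cmplx_add, cmplx_mul, cmplx_neg]

variable {A : Matrix (Fin d ⊕ Fin d) (Fin d ⊕ Fin d) ℂ} {B M N : Matrix (Fin d) (Fin d) ℂ}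

lemma isUnit_of_mul_graphFrame_eq (hA : A ∈ symplecticGroup (Fin d) ℂ) (hAreal : Aᴴ = Aᵀ)
    (hB : B.IsSymm) (hY : (imM B).PosDef) (hAB : A * graphFrame B = fromRows M N) :
    IsUnit M := by
  have h := SymplecticGroup.conjTranspose_mul_J_mul_of_mem hA hAreal (graphFrame B)
    (1 : Matrix (Fin d) (Fin d) ℂ)
  rw [Matrix.mul_one, hAB, conjTranspose_fromRows_mul_J_mul_fromRows, conjTranspose_one,
    Matrix.one_mul, Matrix.mul_one, conjTranspose_graphFrame_mul_J_mul hB] at h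
  exact isUnit_of_conjTranspose_mul_sub_eq_smul_posDef (by simp) (posDef_cmplx_iff.mpr hY) h

lemma mul_graphFrame_mul_inv (hAB : A * graphFrame B = fromRows M N) (hM : IsUnit M) :
    A * graphFrame B * M⁻¹ = graphFrame (N * M⁻¹) := by
  rw [hAB, fromRows_mul, mul_nonsing_inv _ ((isUnit_iff_isUnit_det M).mp hM)]

lemma isSymm_mul_inv_of_mul_graphFrame_eq (hA : A ∈ symplecticGroup (Fin d) ℂ) (hB : B.IsSymm)
    (hAB : A * graphFrame B = fromRows M N) (hM : IsUnit M) : (N * M⁻¹).IsSymm := by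
  have h := SymplecticGroup.transpose_mul_J_mul_of_mem hA (graphFrame B) M⁻¹
  rw [mul_graphFrame_mul_inv hAB hM, transpose_fromRows_mul_J_mul_fromRows,
    transpose_fromRows_mul_J_mul_fromRows] at h
  simpa only [transpose_one, Matrix.mul_one, Matrix.one_mul, hB.eq, sub_self, Matrix.mul_zero,
    Matrix.zero_mul, sub_eq_zero, IsSymm] using h

lemma cmplx_imM_mul_inv_of_mul_graphFrame_eq (hA : A ∈ symplecticGroup (Fin d) ℂ)
    (hAreal : Aᴴ = Aᵀ) (hB : B.IsSymm) (hAB : A * graphFrame B = fromRows M N) (hM : IsUnit M) :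
    cmplx (imM (N * M⁻¹)) = (M⁻¹)ᴴ * cmplx (imM B) * M⁻¹ := by
  have h := SymplecticGroup.conjTranspose_mul_J_mul_of_mem hA hAreal (graphFrame B) M⁻¹
  rw [mul_graphFrame_mul_inv hAB hM,
    conjTranspose_graphFrame_mul_J_mul (isSymm_mul_inv_of_mul_graphFrame_eq hA hB hAB hM),
    conjTranspose_graphFrame_mul_J_mul hB, Matrix.mul_smul, Matrix.smul_mul] at h
  exact smul_right_injective _ (by simp) h

lemma posDef_imM_mul_inv_of_mul_graphFrame_eq (hA : A ∈ symplecticGroup (Fin d) ℂ)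
    (hAreal : Aᴴ = Aᵀ) (hB : B.IsSymm) (hY : (imM B).PosDef)
    (hAB : A * graphFrame B = fromRows M N) (hM : IsUnit M) : (imM (N * M⁻¹)).PosDef := by
  rw [← posDef_cmplx_iff, cmplx_imM_mul_inv_of_mul_graphFrame_eq hA hAreal hB hAB hM]
  exact (posDef_cmplx_iff.mpr hY).conjTranspose_mul_mul_same
    (mulVec_injective_of_isUnit (isUnit_nonsing_inv_iff.mpr hM))

lemma cmplx_GB_mul_inv_of_mul_graphFrame_eq (hA : A ∈ symplecticGroup (Fin d) ℂ)
    (hAreal : Aᴴ = Aᵀ) (hB : B.IsSymm) (hY : (imM B).PosDef)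
    (hAB : A * graphFrame B = fromRows M N) (hM : IsUnit M) :
    cmplx (GB (N * M⁻¹)) = (A⁻¹)ᵀ * cmplx (GB B) * A⁻¹ := by
  have hMdet := (isUnit_iff_isUnit_det M).mp hM
  have hMHdet : IsUnit Mᴴ.det := by rw [det_conjTranspose]; exact hMdet.star
  have hZ : (cmplx (imM (N * M⁻¹)))⁻¹ = M * (cmplx (imM B))⁻¹ * Mᴴ := by
    rw [cmplx_imM_mul_inv_of_mul_graphFrame_eq hA hAreal hB hAB hM, Matrix.mul_inv_rev,
      Matrix.mul_inv_rev, nonsing_inv_nonsing_inv _ hMdet, conjTranspose_nonsing_inv,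
      nonsing_inv_nonsing_inv _ hMHdet, Matrix.mul_assoc]
  have hY' := posDef_imM_mul_inv_of_mul_graphFrame_eq hA hAreal hB hY hAB hM
  rw [cmplx_GB (isSymm_mul_inv_of_mul_graphFrame_eq hA hB hAB hM)
      ((isUnit_iff_isUnit_det _).mp hY'.isUnit),
    cmplx_GB hB ((isUnit_iff_isUnit_det _).mp hY.isUnit), hZ, ← mul_graphFrame_mul_inv hAB hM,
    ← SymplecticGroup.J_congr_add_smul_J hA]
  congr 3
  simp only [conjTranspose_mul, hAreal, conjTranspose_nonsing_inv, Matrix.mul_assoc,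
    nonsing_inv_mul_cancel_left _ _ hMdet, mul_nonsing_inv_cancel_left _ _ hMHdet]

end SiegelAction

lemma Jmat_eq_neg_J (d : ℕ) : Jmat d = -J (Fin d) ℝ := by
  simp [Jmat, J, fromBlocks_neg]

theorem GB_covariance_general (d : ℕ)
    (S : Matrix (Fin d ⊕ Fin d) (Fin d ⊕ Fin d) ℝ)
    (hS : Sᵀ * Jmat d * S = Jmat d)
    (B : Matrix (Fin d) (Fin d) ℂ) (hBsymm : B.IsSymm) (hBpos : (imM B).PosDef) :
    IsUnit (cmplx S.toBlocks₁₁ + cmplx S.toBlocks₁₂ * B) ∧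
      ((cmplx S.toBlocks₂₁ + cmplx S.toBlocks₂₂ * B) *
          (cmplx S.toBlocks₁₁ + cmplx S.toBlocks₁₂ * B)⁻¹).IsSymm ∧
      (imM ((cmplx S.toBlocks₂₁ + cmplx S.toBlocks₂₂ * B) *
          (cmplx S.toBlocks₁₁ + cmplx S.toBlocks₁₂ * B)⁻¹)).PosDef ∧
      GB ((cmplx S.toBlocks₂₁ + cmplx S.toBlocks₂₂ * B) *
            (cmplx S.toBlocks₁₁ + cmplx S.toBlocks₁₂ * B)⁻¹) =
        (S⁻¹)ᵀ * GB B * S⁻¹ := by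
  have hSp : S ∈ symplecticGroup (Fin d) ℝ := by
    rw [SymplecticGroup.mem_iff']
    simpa only [Jmat_eq_neg_J, Matrix.mul_neg, Matrix.neg_mul, neg_inj] using hS
  have hA : cmplx S ∈ symplecticGroup (Fin d) ℂ := SymplecticGroup.map_mem hSp ofRealHom
  have hAreal : (cmplx S)ᴴ = (cmplx S)ᵀ := conjTranspose_cmplx S
  have hAB : cmplx S * graphFrame B = fromRows (cmplx S.toBlocks₁₁ + cmplx S.toBlocks₁₂ * B)
      (cmplx S.toBlocks₂₁ + cmplx S.toBlocks₂₂ * B) := mul_graphFrame (cmplx S) B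
  have hM := isUnit_of_mul_graphFrame_eq hA hAreal hBsymm hBpos hAB
  refine ⟨hM, isSymm_mul_inv_of_mul_graphFrame_eq hA hBsymm hAB hM,
    posDef_imM_mul_inv_of_mul_graphFrame_eq hA hAreal hBsymm hBpos hAB hM, cmplx_injective ?_⟩
  rw [cmplx_GB_mul_inv_of_mul_graphFrame_eq hA hAreal hBsymm hBpos hAB hM, cmplx_mul, cmplx_mul,
    cmplx_transpose, cmplx_inv _ (SymplecticGroup.symplectic_det hSp)]

/-- Metaplectic covariance of the phase-space width matrix: for
`S ∈ Sp(d,ℝ)` and `B ∈ Σ_d`, the matrix `S₁₁ + S₁₂B` is invertible,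
`B′ = (S₂₁ + S₂₂B)(S₁₁ + S₁₂B)⁻¹ ∈ Σ_d`, and `G_{B′} = (S⁻¹)ᵀ G_B S⁻¹`. -/
theorem GB_covariance (d : ℕ) (hd : 1 ≤ d)
    (S : Matrix (Fin d ⊕ Fin d) (Fin d ⊕ Fin d) ℝ)
    (hS : Sᵀ * Jmat d * S = Jmat d)
    (B : Matrix (Fin d) (Fin d) ℂ) (hBsymm : B.IsSymm) (hBpos : (imM B).PosDef) :
    IsUnit (cmplx S.toBlocks₁₁ + cmplx S.toBlocks₁₂ * B) ∧
      ((cmplx S.toBlocks₂₁ + cmplx S.toBlocks₂₂ * B) *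
          (cmplx S.toBlocks₁₁ + cmplx S.toBlocks₁₂ * B)⁻¹).IsSymm ∧
      (imM ((cmplx S.toBlocks₂₁ + cmplx S.toBlocks₂₂ * B) *
          (cmplx S.toBlocks₁₁ + cmplx S.toBlocks₁₂ * B)⁻¹)).PosDef ∧
      GB ((cmplx S.toBlocks₂₁ + cmplx S.toBlocks₂₂ * B) *
            (cmplx S.toBlocks₁₁ + cmplx S.toBlocks₁₂ * B)⁻¹) =
        (S⁻¹)ᵀ * GB B * S⁻¹ :=
  GB_covariance_general d S hS B hBsymm hBpos
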